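/- arXiv:2602.20455 — 3 statements merged into one kernel-verified Lean document; each statement's English description precedes it below -/
import Mathlib

section
/- The Hermitian curve y^q + y = x^{q+1} has exactly q^3 affine F_{q^2}-rational points, i.e., |{(a,b) ∈ F_{q^2}^2 : b^q + b = a^{q+1}}| = q^3. -/
/-!
The map `T b = b ^ q + b` is additive on `𝔽_{q²}` and lands in the fixed field `{x | x ^ q = x}`
of `x ↦ x ^ q`. Its kernel and that fixed field are root sets of polynomials of degree `q`, so both
have at most `q` elements; since `|ker T| · |im T| = q²`, both bounds are attained, `T` maps onto
the fixed field and each of its fibres has `q` elements. The norm `a ^ (q + 1)` lies in the fixed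
field, so every `a` contributes exactly `q` points `(a, b)`, for `q² · q` in all.
-/

open Polynomial

theorem ncard_setOf_pow_eq_mul_le {R : Type*} [CommRing R] [IsDomain R] {q : ℕ} (hq : 2 ≤ q)
    (c : R) : {x : R | x ^ q = c * x}.ncard ≤ q := by
  classical
  have hsub : {x : R | x ^ q = c * x} ⊆ insert 0 ((nthRoots (q - 1) c).toFinset : Set R) := by
    intro x hx
    by_cases h0 : x = 0
    · exact Or.inl h0
    · right
      rw [Finset.mem_coe, Multiset.mem_toFinset, mem_nthRoots (by omega)]
      apply mul_right_cancel₀ h0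
      rwa [← pow_succ, Nat.sub_add_cancel (by omega)]
  calc {x : R | x ^ q = c * x}.ncard
      ≤ (insert 0 ((nthRoots (q - 1) c).toFinset : Set R)).ncard :=
        Set.ncard_le_ncard hsub (Set.toFinite _)
    _ ≤ (nthRoots (q - 1) c).toFinset.card + 1 := by
        grw [Set.ncard_insert_le, Set.ncard_coe_finset]
    _ ≤ q := by
        have := (Multiset.toFinset_card_le _).trans (card_nthRoots (q - 1) c)
        omega

theorem ncard_setOf_prod_eq_mul {α β : Type*} [Finite α] [Finite β] {P : α → β → Prop} {k : ℕ}
    (h : ∀ a, {b | P a b}.ncard = k) : {v : α × β | P v.1 v.2}.ncard = Nat.card α * k := by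
  have := Fintype.ofFinite α
  have hfiber (a : α) : Nat.card {b // P a b} = k := (Nat.card_coe_set_eq {b | P a b}).trans (h a)
  calc {v : α × β | P v.1 v.2}.ncard = Nat.card ((a : α) × {b // P a b}) :=
        (Nat.card_coe_set_eq _).symm.trans (Nat.card_congr (Equiv.subtypeProdEquivSigmaSubtype P))
    _ = Nat.card α * k := by
        rw [Nat.card_sigma, Finset.sum_congr rfl fun a _ => hfiber a, Finset.sum_const,
          Finset.card_univ, smul_eq_mul, Nat.card_eq_fintype_card]

section CardEqSq

variable {F : Type*} [Field F] [Fintype F] {q : ℕ}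

theorem two_le_of_card_eq_sq (hcard : Fintype.card F = q ^ 2) : 2 ≤ q := by
  have h := Fintype.one_lt_card (α := F)
  rw [hcard, one_lt_pow_iff two_ne_zero] at h
  exact h

theorem pow_pow_eq_self_of_card_eq_sq (hcard : Fintype.card F = q ^ 2) (x : F) :
    (x ^ q) ^ q = x := by
  rw [← pow_mul, ← sq, ← hcard, FiniteField.pow_card]

theorem pow_succ_pow_eq_self_of_card_eq_sq (hcard : Fintype.card F = q ^ 2) (a : F) :
    (a ^ (q + 1)) ^ q = a ^ (q + 1) := by
  rw [pow_succ, mul_pow, pow_pow_eq_self_of_card_eq_sq hcard, mul_comm]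

theorem ncard_setOf_pow_eq_self_le (hcard : Fintype.card F = q ^ 2) :
    {x : F | x ^ q = x}.ncard ≤ q := by
  simpa only [one_mul] using ncard_setOf_pow_eq_mul_le (two_le_of_card_eq_sq hcard) (1 : F)

end CardEqSq

section FrobeniusTrace

variable (F : Type*) [Field F] (p n : ℕ) [ExpChar F p]

def frobeniusTrace : F →+ F :=
  (iterateFrobenius F p n).toAddMonoidHom + AddMonoidHom.id F

variable {F p n}

theorem frobeniusTrace_apply (b : F) : frobeniusTrace F p n b = b ^ p ^ n + b := rfl

variable [Fintype F]

theorem frobeniusTrace_pow (hcard : Fintype.card F = (p ^ n) ^ 2) (b : F) :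
    frobeniusTrace F p n b ^ p ^ n = frobeniusTrace F p n b := by
  have h := map_add (iterateFrobenius F p n) (b ^ p ^ n) b
  simp only [iterateFrobenius_def, pow_pow_eq_self_of_card_eq_sq hcard] at h
  rw [frobeniusTrace_apply, h, add_comm]

theorem natCard_ker_frobeniusTrace_le (hcard : Fintype.card F = (p ^ n) ^ 2) :
    Nat.card (frobeniusTrace F p n).ker ≤ p ^ n := by
  have hker : ((frobeniusTrace F p n).ker : Set F) = {x | x ^ p ^ n = -1 * x} := by
    ext x
    simp [frobeniusTrace_apply, add_eq_zero_iff_eq_neg]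
  rw [← SetLike.coe_sort_coe, Nat.card_coe_set_eq, hker]
  exact ncard_setOf_pow_eq_mul_le (two_le_of_card_eq_sq hcard) _

theorem range_frobeniusTrace_subset (hcard : Fintype.card F = (p ^ n) ^ 2) :
    ((frobeniusTrace F p n).range : Set F) ⊆ {x | x ^ p ^ n = x} := by
  rintro _ ⟨b, rfl⟩
  exact frobeniusTrace_pow hcard b

theorem natCard_range_frobeniusTrace_le (hcard : Fintype.card F = (p ^ n) ^ 2) :
    Nat.card (frobeniusTrace F p n).range ≤ p ^ n := by
  rw [← SetLike.coe_sort_coe, Nat.card_coe_set_eq]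
  exact (Set.ncard_le_ncard (range_frobeniusTrace_subset hcard)).trans
    (ncard_setOf_pow_eq_self_le hcard)

theorem natCard_ker_mul_natCard_range_frobeniusTrace (hcard : Fintype.card F = (p ^ n) ^ 2) :
    Nat.card (frobeniusTrace F p n).ker * Nat.card (frobeniusTrace F p n).range
      = p ^ n * p ^ n := by
  rw [← AddSubgroup.index_ker, AddSubgroup.card_mul_index, Nat.card_eq_fintype_card, hcard, sq]

theorem natCard_ker_frobeniusTrace (hcard : Fintype.card F = (p ^ n) ^ 2) :
    Nat.card (frobeniusTrace F p n).ker = p ^ n := by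
  nlinarith [natCard_ker_frobeniusTrace_le hcard, natCard_range_frobeniusTrace_le hcard,
    natCard_ker_mul_natCard_range_frobeniusTrace hcard]

theorem natCard_range_frobeniusTrace (hcard : Fintype.card F = (p ^ n) ^ 2) :
    Nat.card (frobeniusTrace F p n).range = p ^ n := by
  have hmul := natCard_ker_mul_natCard_range_frobeniusTrace hcard
  rw [natCard_ker_frobeniusTrace hcard] at hmul
  exact Nat.eq_of_mul_eq_mul_left (expChar_pow_pos F p n) hmul

theorem range_frobeniusTrace (hcard : Fintype.card F = (p ^ n) ^ 2) :
    ((frobeniusTrace F p n).range : Set F) = {x | x ^ p ^ n = x} := by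
  refine Set.eq_of_subset_of_ncard_le (range_frobeniusTrace_subset hcard) ?_
  rw [← Nat.card_coe_set_eq ((frobeniusTrace F p n).range : Set F), SetLike.coe_sort_coe,
    natCard_range_frobeniusTrace hcard]
  exact ncard_setOf_pow_eq_self_le hcard

theorem ncard_setOf_pow_add_self_eq (hcard : Fintype.card F = (p ^ n) ^ 2) {a : F}
    (ha : a ^ p ^ n = a) : {b : F | b ^ p ^ n + b = a}.ncard = p ^ n := by
  obtain ⟨b, rfl⟩ : a ∈ (frobeniusTrace F p n).range := by
    rwa [← SetLike.mem_coe, range_frobeniusTrace hcard]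
  rw [← Nat.card_coe_set_eq]
  exact (Nat.card_congr ((frobeniusTrace F p n).fiberEquivKer b)).trans
    (natCard_ker_frobeniusTrace hcard)

end FrobeniusTrace

theorem hermitian_affine_point_count_general (p n q : ℕ) (hp : p.Prime) (hq : q = p ^ n)
    (F : Type) [Field F] [Fintype F] [CharP F p]
    (hcard : Fintype.card F = q ^ 2) :
    {v : F × F | v.2 ^ q + v.2 = v.1 ^ (q + 1)}.ncard = q ^ 3 := by
  have : Fact p.Prime := ⟨hp⟩
  subst hq
  rw [ncard_setOf_prod_eq_mul fun a =>
    ncard_setOf_pow_add_self_eq hcard (pow_succ_pow_eq_self_of_card_eq_sq hcard a),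
    Nat.card_eq_fintype_card, hcard]
  ring

theorem hermitian_affine_point_count (p n q : ℕ) (hp : p.Prime) (hn : 0 < n) (hq : q = p ^ n)
    (F : Type) [Field F] [Fintype F] [CharP F p]
    (hcard : Fintype.card F = q ^ 2) :
    {v : F × F | v.2 ^ q + v.2 = v.1 ^ (q + 1)}.ncard = q ^ 3 :=
  hermitian_affine_point_count_general p n q hp hq F hcard
end

section
/- Let ζ generate F_{q^2}^* and σ(x,y) = (ζx, ζ^{q+1}y). Then σ acts on the q^3 affine points of the Hermitian curve, and its orbits are as follows: the points with x ≠ 0 form q orbits of size q^2-1, the set {(0,b) : b^q+b=0, b ≠ 0} is a union of orbits of σ, and (0,0) is a fixed point of σ. -/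
section
variable {p n q : ℕ} {F : Type} [Field F] [Fintype F] [CharP F p]

lemma my_frob (hp : p.Prime) (hq : q = p ^ n) (a b : F) : (a + b) ^ q = a ^ q + b ^ q := by
  subst hq
  haveI : Fact p.Prime := ⟨hp⟩
  exact add_pow_char_pow a b p n

lemma my_powcard (hcard : Fintype.card F = q ^ 2) (a : F) : a ^ q ^ 2 = a := by
  rw [← hcard]; exact FiniteField.pow_card a
end

open Polynomial in
lemma rootset_ncard_le' {F : Type} [Field F] (f : F[X]) (hf : f ≠ 0) :
    {y : F | f.eval y = 0}.ncard ≤ f.natDegree := by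
  classical
  have h1 : {y : F | f.eval y = 0} = ↑f.roots.toFinset := by
    ext y; simp [Polynomial.mem_roots, hf]
  rw [h1, Set.ncard_coe_finset]
  exact le_trans (f.roots.toFinset_card_le) (f.card_roots')

open Polynomial in
lemma pow_add_mul_ncard_le' {F : Type} [Field F] {q : ℕ} (hq : 2 ≤ q) (a : F) :
    {y : F | y ^ q + a * y = 0}.ncard ≤ q := by
  classical
  set f : F[X] := X ^ q + C a * X with hf
  have hdeg : f.natDegree ≤ q := by
    apply le_trans (natDegree_add_le _ _)
    simp only [natDegree_X_pow, max_le_iff, le_refl, true_and]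
    exact le_trans (natDegree_mul_le) (by simp [natDegree_X]; omega)
  have hc : f.coeff q = 1 := by
    rw [hf, coeff_add, coeff_X_pow, coeff_C_mul, coeff_X]
    rw [if_pos rfl, if_neg (by omega)]; ring
  have hne : f ≠ 0 := by
    intro h; rw [h] at hc; simp at hc
  have hset : {y : F | y ^ q + a * y = 0} = {y : F | f.eval y = 0} := by
    ext y; simp [hf]
  rw [hset]
  exact le_trans (rootset_ncard_le' f hne) hdeg

section
variable {p n q : ℕ} {F : Type} [Field F] [Fintype F] [CharP F p]

lemma trace_fiber (hp : p.Prime) (hn : 0 < n) (hq : q = p ^ n)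
    (hcard : Fintype.card F = q ^ 2) (c : F) (hc : c ^ q = c) :
    {y : F | y ^ q + y = c}.ncard = q := by
  have hq2 : 2 ≤ q := by rw [hq]; exact Nat.one_lt_pow hn.ne' hp.one_lt
  set T : F →+ F := { toFun := fun y => y ^ q + y,
                      map_zero' := by simp [zero_pow (by omega : q ≠ 0)],
                      map_add' := fun a b => by
                        show (a + b) ^ q + (a + b) = (a ^ q + a) + (b ^ q + b)
                        rw [my_frob hp hq]; ring } with hT
  set K : Set F := {y : F | y ^ q + y = 0} with hK
  have hkerK : (T.ker : Set F) = K := by ext y; simp [hT, AddMonoidHom.mem_ker, hK]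
  have hK_le : K.ncard ≤ q := by
    have := pow_add_mul_ncard_le' hq2 (1 : F)
    simpa [one_mul] using this
  set Fq : Set F := {z : F | z ^ q = z} with hFq
  have hFq_le : Fq.ncard ≤ q := by
    have h1 := pow_add_mul_ncard_le' hq2 (-1 : F)
    have : Fq = {y : F | y ^ q + (-1) * y = 0} := by
      ext z; simp [hFq]; constructor <;> intro h <;> linear_combination h
    rw [this]; exact h1
  have hrange_sub : (T.range : Set F) ⊆ Fq := by
    rintro z ⟨y, rfl⟩
    show (y ^ q + y) ^ q = y ^ q + y
    rw [my_frob hp hq, ← pow_mul, ← pow_two, my_powcard hcard, add_comm]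
  have hmul : q * q = Nat.card T.range * Nat.card T.ker := by
    have h1 : Nat.card F = Nat.card (F ⧸ T.ker) * Nat.card T.ker :=
      AddSubgroup.card_eq_card_quotient_mul_card_addSubgroup T.ker
    have h2 : Nat.card (F ⧸ T.ker) = Nat.card T.range :=
      Nat.card_congr (QuotientAddGroup.quotientKerEquivRange T).toEquiv
    rw [h2, Nat.card_eq_fintype_card, hcard, pow_two] at h1
    exact h1
  have hkercard : Nat.card T.ker = K.ncard := by
    rw [← hkerK, ← Nat.card_coe_set_eq]; rfl
  have hrangecard : Nat.card T.range = ((T.range : Set F)).ncard := by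
    rw [← Nat.card_coe_set_eq]; rfl
  have hrange_le : Nat.card T.range ≤ q := by
    rw [hrangecard]
    exact le_trans (Set.ncard_le_ncard hrange_sub (Set.toFinite _)) hFq_le
  have hker_le : Nat.card T.ker ≤ q := by rw [hkercard]; exact hK_le
  have hker_eq : Nat.card T.ker = q := by
    have h3 : q * q ≤ q * Nat.card T.ker := by
      calc q * q = Nat.card T.range * Nat.card T.ker := hmul
        _ ≤ q * Nat.card T.ker := Nat.mul_le_mul_right _ hrange_le
    have h4 := Nat.le_of_mul_le_mul_left h3 (by omega : 0 < q)
    omega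
  have hrange_eq : Nat.card T.range = q := by
    have : q * q ≤ Nat.card T.range * q := by rw [hmul, hker_eq]
    have := Nat.le_of_mul_le_mul_right this (by omega : 0 < q)
    omega
  -- range = Fq
  have hrangeFq : (T.range : Set F) = Fq := by
    apply Set.eq_of_subset_of_ncard_le hrange_sub _ (Set.toFinite _)
    rw [← hrangecard, hrange_eq]; exact hFq_le
  have hcFq : c ∈ Fq := hc
  rw [← hrangeFq] at hcFq
  obtain ⟨y₀, hy₀⟩ := hcFq
  have himg : {y : F | y ^ q + y = c} = (fun k => k + y₀) '' K := by
    ext y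
    constructor
    · intro hy
      refine ⟨y - y₀, ?_, by ring⟩
      have : T (y - y₀) = 0 := by
        rw [map_sub, hy₀]
        show (y ^ q + y) - c = 0
        rw [hy]; ring
      simpa [hT, hK] using this
    · rintro ⟨k, hk, rfl⟩
      have : T (k + y₀) = T k + T y₀ := map_add _ _ _
      have hk0 : T k = 0 := by simpa [hT, hK] using hk
      show T (k + y₀) = c
      rw [this, hk0, hy₀, zero_add]
  rw [himg, Set.ncard_image_of_injective _ (add_left_injective y₀)]
  rw [← hkercard, hker_eq]

lemma norm_mem_Fq (hcard : Fintype.card F = q ^ 2) (x : F) :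
    (x ^ (q + 1)) ^ q = x ^ (q + 1) := by
  rw [← pow_mul]
  have h1 : (q + 1) * q = q ^ 2 + q := by ring
  rw [h1, pow_add, my_powcard hcard, ← pow_succ']

lemma Sx_ncard (hp : p.Prime) (hn : 0 < n) (hq : q = p ^ n)
    (hcard : Fintype.card F = q ^ 2) :
    ({v : F × F | v.2 ^ q + v.2 = v.1 ^ (q + 1) ∧ v.1 ≠ 0}).ncard = q ^ 3 - q := by
  classical
  have hq2 : 2 ≤ q := by rw [hq]; exact Nat.one_lt_pow hn.ne' hp.one_lt
  have key : ∀ x : F, {y : F | y ^ q + y = x ^ (q + 1)}.ncard = q := fun x =>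
    trace_fiber hp hn hq hcard _ (norm_mem_Fq hcard x)
  rw [← Nat.card_coe_set_eq]
  have e : ↥{v : F × F | v.2 ^ q + v.2 = v.1 ^ (q + 1) ∧ v.1 ≠ 0} ≃
      Σ x : {x : F // x ≠ 0}, {y : F // y ^ q + y = x.1 ^ (q + 1)} :=
    { toFun := fun v => ⟨⟨v.1.1, v.2.2⟩, ⟨v.1.2, v.2.1⟩⟩
      invFun := fun s => ⟨(s.1.1, s.2.1), s.2.2, s.1.2⟩
      left_inv := fun v => rfl
      right_inv := fun s => rfl }
  rw [Nat.card_congr e, Nat.card_eq_fintype_card, Fintype.card_sigma]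
  have hfib : ∀ x : {x : F // x ≠ 0},
      Fintype.card {y : F // y ^ q + y = x.1 ^ (q + 1)} = q := by
    intro x
    rw [← Nat.card_eq_fintype_card]
    exact (Nat.card_coe_set_eq _).trans (key x.1)
  rw [Finset.sum_congr rfl (fun x _ => hfib x), Finset.sum_const, Finset.card_univ,
    smul_eq_mul]
  have hcnz : Fintype.card {x : F // x ≠ 0} = q ^ 2 - 1 := by
    rw [Fintype.card_subtype_compl, hcard, Fintype.card_subtype_eq]
  rw [hcnz, Nat.sub_mul, one_mul, ← pow_succ]
end

theorem hermitian_sigma_orbit_structure (p n q : ℕ) (hp : p.Prime) (hn : 0 < n)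
    (hq : q = p ^ n)
    (F : Type) [Field F] [Fintype F] [CharP F p] (hcard : Fintype.card F = q ^ 2)
    (ζ : F) (hζ : orderOf ζ = q ^ 2 - 1) :
    let σ : F × F → F × F := fun v => (ζ * v.1, ζ ^ (q + 1) * v.2)
    let orbit : F × F → Set (F × F) := fun w => {v | ∃ m : ℕ, σ^[m] w = v}
    let Sx : Set (F × F) := {v | v.2 ^ q + v.2 = v.1 ^ (q + 1) ∧ v.1 ≠ 0}
    σ (0, 0) = (0, 0) ∧
    σ '' {v : F × F | v.1 = 0 ∧ v.2 ≠ 0 ∧ v.2 ^ q + v.2 = 0}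
      = {v : F × F | v.1 = 0 ∧ v.2 ≠ 0 ∧ v.2 ^ q + v.2 = 0} ∧
    Sx.ncard = q ^ 3 - q ∧
    (∀ w ∈ Sx, orbit w ⊆ Sx ∧ (orbit w).ncard = q ^ 2 - 1) ∧
    {O : Set (F × F) | ∃ w ∈ Sx, O = orbit w}.ncard = q := by
  classical
  intro σ orbit Sx
  have hq2 : 2 ≤ q := by rw [hq]; exact Nat.one_lt_pow hn.ne' hp.one_lt
  set N : ℕ := q ^ 2 - 1 with hN
  have hN0 : 0 < N := by have : 4 ≤ q ^ 2 := by nlinarith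
                         omega
  have hζN : ζ ^ N = 1 := by rw [← hζ]; exact pow_orderOf_eq_one ζ
  have hζ0 : ζ ≠ 0 := by
    intro h
    rw [h, zero_pow (by omega : N ≠ 0)] at hζN
    exact zero_ne_one hζN
  set c : F := ζ ^ (q + 1) with hcdef
  have hc0 : c ≠ 0 := pow_ne_zero _ hζ0
  have hcq : c ^ q = c := norm_mem_Fq hcard ζ
  have hcN : c ^ N = 1 := by rw [hcdef, ← pow_mul, mul_comm, pow_mul, hζN, one_pow]
  -- iterate formula
  have hiter : ∀ (m : ℕ) (v : F × F), σ^[m] v = (ζ ^ m * v.1, c ^ m * v.2) := by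
    intro m
    induction m with
    | zero => intro v; simp
    | succ k ih =>
      intro v
      rw [Function.iterate_succ_apply', ih v]
      show (ζ * (ζ ^ k * v.1), c * (c ^ k * v.2)) = _
      rw [Prod.mk.injEq]
      constructor <;> · rw [pow_succ]; ring
  have hσid : σ^[N] = id := by
    funext v
    rw [hiter, hζN, hcN]
    simp
  have hmod : ∀ (m : ℕ) (v : F × F), σ^[m] v = σ^[m % N] v := by
    intro m v
    conv_lhs => rw [← Nat.mod_add_div m N]
    rw [Function.iterate_add_apply, Function.iterate_mul, hσid]
    simp
  -- orbit equality lemmas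
  have horb_self : ∀ w, w ∈ orbit w := fun w => ⟨0, rfl⟩
  have horb_sub : ∀ w v, v ∈ orbit w → orbit v ⊆ orbit w := by
    rintro w v ⟨m, rfl⟩ u ⟨k, rfl⟩
    exact ⟨k + m, (Function.iterate_add_apply σ k m w)⟩
  have horb_mem : ∀ w v, v ∈ orbit w → w ∈ orbit v := by
    rintro w v ⟨m, rfl⟩
    refine ⟨N - m % N, ?_⟩
    rw [hmod m w, ← Function.iterate_add_apply]
    have h1 : N - m % N + m % N = N := Nat.sub_add_cancel (le_of_lt (Nat.mod_lt m hN0))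
    rw [h1, hσid]
    rfl
  have horb_eq : ∀ w v, v ∈ orbit w → orbit v = orbit w := fun w v hv =>
    Set.Subset.antisymm (horb_sub w v hv) (horb_sub v w (horb_mem w v hv))
  -- part 4 components
  have hsub : ∀ w ∈ Sx, orbit w ⊆ Sx := by
    rintro w ⟨hw1, hw2⟩ v ⟨m, rfl⟩
    rw [hiter]
    constructor
    · show (c ^ m * w.2) ^ q + c ^ m * w.2 = (ζ ^ m * w.1) ^ (q + 1)
      have h1 : (c ^ m) ^ q = c ^ m := by
        rw [← pow_mul, mul_comm, pow_mul, hcq]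
      have h2 : (ζ ^ m) ^ (q + 1) = c ^ m := by
        rw [← pow_mul, mul_comm, pow_mul]
      rw [mul_pow, h1, ← mul_add, hw1, mul_pow, h2]
    · exact mul_ne_zero (pow_ne_zero _ hζ0) hw2
  have hinj : ∀ w ∈ Sx, ∀ m₁ ∈ Finset.range N, ∀ m₂ ∈ Finset.range N,
      σ^[m₁] w = σ^[m₂] w → m₁ = m₂ := by
    intro w hw m₁ hm₁ m₂ hm₂ heq
    rw [hiter, hiter, Prod.mk.injEq] at heq
    have h1 : ζ ^ m₁ = ζ ^ m₂ := mul_right_cancel₀ hw.2 heq.1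
    rw [Finset.mem_range] at hm₁ hm₂
    exact pow_injOn_Iio_orderOf (by simpa [hζ] using hm₁) (by simpa [hζ] using hm₂) h1
  have horb_fin : ∀ w ∈ Sx, orbit w = ↑((Finset.range N).image (fun m => σ^[m] w)) := by
    intro w hw
    ext v
    simp only [Finset.coe_image, Finset.coe_range, Set.mem_image, Set.mem_Iio]
    constructor
    · rintro ⟨m, rfl⟩
      exact ⟨m % N, Nat.mod_lt m hN0, (hmod m w).symm⟩
    · rintro ⟨m, _, rfl⟩
      exact ⟨m, rfl⟩
  have hcard_orb : ∀ w ∈ Sx, (orbit w).ncard = N := by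
    intro w hw
    rw [horb_fin w hw, Set.ncard_coe_finset]
    rw [Finset.card_image_of_injOn (fun m₁ hm₁ m₂ hm₂ h => hinj w hw m₁ hm₁ m₂ hm₂ h)]
    exact Finset.card_range N
  refine ⟨?_, ?_, ?_, ?_, ?_⟩
  · show (ζ * 0, c * 0) = (0, 0)
    simp
  · ext v
    simp only [Set.mem_image, Set.mem_setOf_eq]
    constructor
    · rintro ⟨w, ⟨hw1, hw2, hw3⟩, rfl⟩
      refine ⟨by show ζ * w.1 = 0; rw [hw1, mul_zero], mul_ne_zero hc0 hw2, ?_⟩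
      show (c * w.2) ^ q + c * w.2 = 0
      rw [mul_pow, hcq, ← mul_add, hw3, mul_zero]
    · rintro ⟨hv1, hv2, hv3⟩
      refine ⟨(0, c⁻¹ * v.2), ⟨rfl, mul_ne_zero (inv_ne_zero hc0) hv2, ?_⟩, ?_⟩
      · show (c⁻¹ * v.2) ^ q + c⁻¹ * v.2 = 0
        rw [mul_pow, inv_pow, hcq, ← mul_add, hv3, mul_zero]
      · show (ζ * 0, c * (c⁻¹ * v.2)) = v
        rw [mul_zero, ← mul_assoc, mul_inv_cancel₀ hc0, one_mul, ← hv1]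
  · exact Sx_ncard hp hn hq hcard
  · exact fun w hw => ⟨hsub w hw, hcard_orb w hw⟩
  · -- orbit count
    have hSfin : Sx.Finite := Set.toFinite _
    set S : Finset (F × F) := hSfin.toFinset with hSdef
    have hScoe : ↑S = Sx := hSfin.coe_toFinset
    set OF : Finset (Set (F × F)) := S.image orbit with hOF
    have hset : {O : Set (F × F) | ∃ w ∈ Sx, O = orbit w} = ↑OF := by
      ext O
      simp only [Set.mem_setOf_eq, hOF, Finset.coe_image, Set.mem_image, Finset.mem_coe,
        hSdef, Set.Finite.mem_toFinset]
      constructor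
      · rintro ⟨w, hw, rfl⟩; exact ⟨w, hw, rfl⟩
      · rintro ⟨w, hw, rfl⟩; exact ⟨w, hw, rfl⟩
    rw [hset, Set.ncard_coe_finset]
    have hfiber : ∀ w ∈ S, (S.filter (fun a => orbit a = orbit w)).card = N := by
      intro w hwS
      have hw : w ∈ Sx := by rwa [hSdef, Set.Finite.mem_toFinset] at hwS
      have hfeq : (↑(S.filter (fun a => orbit a = orbit w)) : Set (F × F)) = orbit w := by
        ext a
        simp only [Finset.coe_filter, Set.mem_setOf_eq, hSdef, Set.Finite.mem_toFinset]
        constructor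
        · rintro ⟨_, ha⟩
          rw [← ha]; exact horb_self a
        · intro ha
          exact ⟨hsub w hw ha, horb_eq w a ha⟩
      have := hcard_orb w hw
      rw [← hfeq, Set.ncard_coe_finset] at this
      exact this
    have hsum : S.card = OF.card * N := by
      rw [Finset.card_eq_sum_card_image orbit S]
      rw [Finset.sum_congr rfl (fun O hO => ?_), Finset.sum_const, smul_eq_mul]
      obtain ⟨w, hwS, rfl⟩ := Finset.mem_image.mp hO
      exact hfiber w hwS
    have hScard : S.card = q * N := by
      have h1 : S.card = Sx.ncard := by rw [← Set.ncard_coe_finset, hScoe]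
      rw [h1, Sx_ncard hp hn hq hcard, hN, Nat.mul_sub, mul_one, ← pow_succ']
    rw [hScard] at hsum
    exact (Nat.eq_of_mul_eq_mul_right hN0 hsum.symm)
end

section
/- Let C be a linear [n,k] code over F_q with generator matrix G = [I_k | A] and parity-check matrix H = [-Aᵀ | I_{n-k}], and minimum distance d with t = ⌊(d-1)/2⌋. For a received word y = c + e with c ∈ C and wt(e) ≤ t, the first k coordinates of y equal those of c if and only if wt(H yᵀ) ≤ t. -/
/-!
The parity-check matrix kills every codeword, so the syndrome of `y = c + e` is that of `e`,
namely `e_R - e_L A`. If the information part `e_L` of the error vanishes, the syndrome is `e_R`,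
of weight at most `wt e ≤ t`. Conversely, `e_L G = (e_L, e_L A)` is a codeword differing from `e`
only by the syndrome on the redundancy positions, so its weight is at most `2t < d`; hence it is
zero, and so is `e_L`.
-/

open Matrix Function

section Weight

variable {ι κ R : Type*}

lemma ncard_support_comp_le_of_injective [Zero R] [Finite ι] (v : ι → R) {f : κ → ι}
    (hf : Injective f) : (support (v ∘ f)).ncard ≤ (support v).ncard := by
  rw [support_comp_eq_preimage, ← Set.ncard_image_of_injective _ hf]
  exact Set.ncard_le_ncard (Set.image_preimage_subset f _) (Set.toFinite _)

lemma ncard_support_sub_le [AddGroup R] [Finite ι] (v w : ι → R) :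
    (support (v - w)).ncard ≤ (support v).ncard + (support w).ncard :=
  (Set.ncard_le_ncard (support_sub v w) (Set.toFinite _)).trans (Set.ncard_union_le _ _)

lemma support_sumElim_zero_left [Zero R] (w : κ → R) :
    support (Sum.elim (0 : ι → R) w) = Sum.inr '' support w := by
  ext (i | j) <;> simp

lemma eq_zero_of_mem_of_ncard_support_le [Zero R] [Finite ι] {C : Set (ι → R)} {d : ℕ}
    (hd : ∀ c ∈ C, c ≠ 0 → d ≤ (support c).ncard) {c : ι → R} (hc : c ∈ C)
    (hwt : (support c).ncard ≤ 2 * ((d - 1) / 2)) : c = 0 := by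
  by_contra hne
  have hpos : 0 < (support c).ncard :=
    (Set.ncard_pos (Set.toFinite _)).mpr (support_nonempty_iff.mpr hne)
  have := hd c hc hne
  omega

end Weight

section Systematic

variable {R : Type*} [CommRing R] {k m : Type*} [Fintype k] [Fintype m] [DecidableEq m]
  (A : Matrix k m R)

lemma fromCols_neg_transpose_one_mulVec (v : k ⊕ m → R) :
    fromCols (-Aᵀ) 1 *ᵥ v = v ∘ Sum.inr - (v ∘ Sum.inl) ᵥ* A := by
  simp [neg_mulVec, mulVec_transpose, sub_eq_neg_add]

lemma fromCols_neg_transpose_one_mulVec_vecMul_fromCols_one [DecidableEq k] (u : k → R) :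
    fromCols (-Aᵀ) 1 *ᵥ (u ᵥ* fromCols 1 A) = 0 := by
  simp [neg_mulVec, mulVec_transpose]

lemma ncard_support_vecMul_fromCols_one_le [DecidableEq k] (e : k ⊕ m → R) :
    (support ((e ∘ Sum.inl) ᵥ* fromCols (1 : Matrix k k R) A)).ncard ≤
      (support e).ncard + (support (fromCols (-Aᵀ) 1 *ᵥ e)).ncard := by
  have hcw : (e ∘ Sum.inl) ᵥ* fromCols 1 A =
      e - Sum.elim (0 : k → R) (fromCols (-Aᵀ) 1 *ᵥ e) := by
    ext (i | j) <;> simp [neg_mulVec, mulVec_transpose]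
  rw [hcw]
  refine (ncard_support_sub_le _ _).trans ?_
  rw [support_sumElim_zero_left, Set.ncard_image_of_injective _ Sum.inr_injective]

end Systematic

theorem syndrome_weight_criterion (F : Type) [Field F] (k m : ℕ)
    (A : Matrix (Fin k) (Fin m) F) (d : ℕ)
    (C : Set ((Fin k ⊕ Fin m) → F))
    (hC : C = {v | ∃ u : Fin k → F, v = Matrix.vecMul u (Matrix.fromCols 1 A)})
    (hd : ∀ c ∈ C, c ≠ 0 → d ≤ {i | c i ≠ 0}.ncard)
    (t : ℕ) (ht : t = (d - 1) / 2)
    (c e : (Fin k ⊕ Fin m) → F) (hc : c ∈ C) (he : {i | e i ≠ 0}.ncard ≤ t)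
    (y : (Fin k ⊕ Fin m) → F) (hy : y = c + e) :
    (∀ i : Fin k, y (Sum.inl i) = c (Sum.inl i)) ↔
      {j : Fin m | Matrix.mulVec (Matrix.fromCols (-A.transpose) 1) y j ≠ 0}.ncard ≤ t := by
  obtain ⟨u, rfl⟩ := hC ▸ hc
  have hsyndrome : fromCols (-Aᵀ) 1 *ᵥ y = fromCols (-Aᵀ) 1 *ᵥ e := by
    rw [hy, mulVec_add, fromCols_neg_transpose_one_mulVec_vecMul_fromCols_one, zero_add]
  have hinfo : (∀ i, y (Sum.inl i) = (u ᵥ* fromCols 1 A) (Sum.inl i)) ↔ e ∘ Sum.inl = 0 := by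
    simp [hy, funext_iff]
  change _ ↔ (support (fromCols (-Aᵀ) 1 *ᵥ y)).ncard ≤ t
  rw [hinfo, hsyndrome]
  constructor
  · intro he_info
    rw [fromCols_neg_transpose_one_mulVec, he_info, zero_vecMul, sub_zero]
    exact (ncard_support_comp_le_of_injective e Sum.inr_injective).trans he
  · intro hs
    have hcodeword : (e ∘ Sum.inl) ᵥ* fromCols (1 : Matrix (Fin k) (Fin k) F) A = 0 := by
      refine eq_zero_of_mem_of_ncard_support_le hd (hC ▸ ⟨_, rfl⟩) ?_
      rw [← ht]
      calc _ ≤ (support e).ncard + (support (fromCols (-Aᵀ) 1 *ᵥ e)).ncard :=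
            ncard_support_vecMul_fromCols_one_le A e
        _ ≤ t + t := add_le_add he hs
        _ = 2 * t := (two_mul t).symm
    simpa using congrArg (· ∘ Sum.inl) hcodeword
end
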